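/- For a non-negative real sequence (a_k) satisfying a_{k+1}^2 ≤ ρ a_k^2 + b_k a_k + c for all k, where 0 ≤ ρ < 1, c ≥ 0, and (b_k) is a non-increasing positive sequence, it holds for all k' ≥ 0 and all k > k' that a_k^2 ≤ ρ'^{k-k'} a_{k'}^2 + (a*_{k'})^2, where a*_{k'} = (b_{k'} + sqrt(b_{k'}^2 + 4(1-ρ)c)) / (2(1-ρ)) and ρ' = 1 - sqrt(b_{k'}^2 + 4(1-ρ)c) / (2 a*_{k'}). -/
import Mathlib

/-- Lemma 5 of the paper: recursive bound for a nonnegative sequence satisfying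
`a_{k+1}^2 ≤ ρ a_k^2 + b_k a_k + c` with non-increasing positive `b`. -/
theorem stmt_0 (a b : ℕ → ℝ) (ρ c : ℝ)
    (ha : ∀ k, 0 ≤ a k) (hρ0 : 0 ≤ ρ) (hρ1 : ρ < 1) (hc : 0 ≤ c)
    (hb_pos : ∀ k, 0 < b k) (hb_mono : ∀ k, b (k + 1) ≤ b k)
    (hrec : ∀ k, a (k + 1) ^ 2 ≤ ρ * a k ^ 2 + b k * a k + c) :
    ∀ k' k : ℕ, k' < k →
      a k ^ 2 ≤
        (1 - Real.sqrt (b k' ^ 2 + 4 * (1 - ρ) * c) /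
            (2 * ((b k' + Real.sqrt (b k' ^ 2 + 4 * (1 - ρ) * c)) / (2 * (1 - ρ))))) ^ (k - k')
          * a k' ^ 2
        + ((b k' + Real.sqrt (b k' ^ 2 + 4 * (1 - ρ) * c)) / (2 * (1 - ρ))) ^ 2 := by
  intro k' k hk
  have h1ρ : (0:ℝ) < 1 - ρ := by linarith
  have hbpos : 0 < b k' := hb_pos k'
  set s := Real.sqrt (b k' ^ 2 + 4 * (1 - ρ) * c) with hs
  have hsnn : 0 ≤ s := Real.sqrt_nonneg _
  have hssq : s ^ 2 = b k' ^ 2 + 4 * (1 - ρ) * c := by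
    rw [hs]; exact Real.sq_sqrt (by nlinarith)
  have hsb : b k' ≤ s := by nlinarith [mul_nonneg h1ρ.le hc]
  set A := (b k' + s) / (2 * (1 - ρ)) with hA
  have hApos : 0 < A := div_pos (by linarith) (by linarith)
  have hA2 : 2 * (1 - ρ) * A = b k' + s := by
    rw [hA]; field_simp
  have hAeq : (1 - ρ) * A ^ 2 = b k' * A + c := by
    have h := hA2
    nlinarith [hssq, hApos]
  have hsA : s * A = b k' * A + 2 * c := by nlinarith [hA2, hAeq]
  set ρ' := 1 - s / (2 * A) with hρ'
  clear_value s A ρ'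
  have hρ'eq : ρ' = ρ + b k' / (2 * A) := by
    rw [hρ']
    field_simp
    nlinarith [hA2]
  have hρ'0 : 0 ≤ ρ' := by
    rw [hρ'eq]
    have : 0 ≤ b k' / (2 * A) := by positivity
    linarith
  have hbanti : ∀ j, k' ≤ j → b j ≤ b k' := by
    intro j hj
    exact antitone_nat_of_succ_le hb_mono hj
  have key : ∀ j x, k' ≤ j → 0 ≤ x →
      ρ * x ^ 2 + b j * x + c ≤ ρ' * x ^ 2 + (1 - ρ') * A ^ 2 := by
    intro j x hj hx
    have hbj : b j ≤ b k' := hbanti j hj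
    have h1 : (1 - ρ') * A ^ 2 = s * A / 2 := by
      rw [hρ']
      field_simp
      ring
    have h2 : ρ' * x ^ 2 = ρ * x ^ 2 + b k' * x ^ 2 / (2 * A) := by
      rw [hρ'eq]; ring
    have hineq : b k' * x ≤ b k' * x ^ 2 / (2 * A) + b k' * A / 2 := by
      rw [div_add' _ _ _ (by positivity), le_div_iff₀ (by positivity)]
      nlinarith [mul_nonneg hbpos.le (sq_nonneg (x - A))]
    have hbjx : b j * x ≤ b k' * x := mul_le_mul_of_nonneg_right hbj hx
    have hsA2 : s * A / 2 = b k' * A / 2 + c := by linarith [hsA]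
    linarith [hbjx, hineq, h1, h2, hsA2]
  -- main induction
  have main : ∀ m, k' < m → a m ^ 2 ≤ ρ' ^ (m - k') * a k' ^ 2 + A ^ 2 := by
    intro m
    induction m with
    | zero => omega
    | succ n ih =>
      intro hm
      rcases Nat.lt_or_ge k' n with hn | hn
      · have h1 := ih hn
        have h2 : a (n + 1) ^ 2 ≤ ρ' * a n ^ 2 + (1 - ρ') * A ^ 2 :=
          le_trans (hrec n) (key n (a n) hn.le (ha n))
        have h3 : ρ' * a n ^ 2 ≤ ρ' * (ρ' ^ (n - k') * a k' ^ 2 + A ^ 2) :=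
          mul_le_mul_of_nonneg_left h1 hρ'0
        have hexp : n + 1 - k' = (n - k') + 1 := by omega
        rw [hexp]
        have h4 : ρ' * (ρ' ^ (n - k') * a k' ^ 2 + A ^ 2)
            = ρ' ^ ((n - k') + 1) * a k' ^ 2 + ρ' * A ^ 2 := by ring
        linarith [h2, h3, h4]
      · have hnk : n = k' := by omega
        subst hnk
        have h2 : a (n + 1) ^ 2 ≤ ρ' * a n ^ 2 + (1 - ρ') * A ^ 2 :=
          le_trans (hrec n) (key n (a n) le_rfl (ha n))
        have hexp : n + 1 - n = 1 := by omega
        rw [hexp, pow_one]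
        have h3 : 0 ≤ ρ' * a n ^ 2 := mul_nonneg hρ'0 (sq_nonneg _)
        have h4 : 0 ≤ ρ' * A ^ 2 := mul_nonneg hρ'0 (sq_nonneg _)
        have h5 : ρ' * a n ^ 2 ≤ ρ' * a n ^ 2 := le_rfl
        linarith [h2, h4]
  exact main k hk
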